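/- Let n ≥ 1 and k ≥ 2. Then zcl_k(n) = k·n if and only if n is even and k ≥ max({3} ∪ {⌈(2^{i+1} − 1)/Z_i(n)⌉ : i ∈ S(n)}). -/

import Mathlib

open MvPolynomial in
/-- `zcl k n` is the maximum of `a_1 + ... + a_(k-1)` over tuples of natural numbers
such that the product of the `(x_i + x_k)^(a_i)` is nonzero in
`(Z/2)[x_1, ..., x_k] / (x_1^(n+1), ..., x_k^(n+1))`. (For `k ≥ 1` the ring has
`(k-1)+1 = k` variables, the last one playing the role of `x_k`.) -/
noncomputable def zcl (k n : ℕ) : ℕ :=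
  sSup {s : ℕ | ∃ a : Fin (k - 1) → ℕ, s = ∑ i, a i ∧
    Ideal.Quotient.mk
      (Ideal.span (Set.range fun i : Fin (k - 1 + 1) =>
        (X i : MvPolynomial (Fin (k - 1 + 1)) (ZMod 2)) ^ (n + 1)))
      (∏ i : Fin (k - 1), (X i.castSucc + X (Fin.last (k - 1))) ^ a i) ≠ 0}

/-- `Zfun i n` is `Z_i(n)`, the sum over `j = 0, ..., i` of `(1 - eps_j) * 2^j`,
where `n` has binary digits `eps_j`. -/
def Zfun (i n : ℕ) : ℕ := ∑ j ∈ Finset.range (i + 1), if n.testBit j then 0 else 2 ^ j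

/-- `S(n)`: the set of `i ≥ 1` with `eps_i = eps_(i-1) = 1` and `eps_(i+1) = 0` in the
binary expansion of `n`, as a finset (any such `i` satisfies `2^i ≤ n`, so `i ≤ n`). -/
def Sfin (n : ℕ) : Finset ℕ :=
  (Finset.range (n + 1)).filter fun i =>
    0 < i ∧ n.testBit i ∧ n.testBit (i - 1) ∧ ¬n.testBit (i + 1)

/-!
Write `k = m + 1`. Expanding, `∏ (x_i + x_k)^(a_i)` is the sum over `j ≤ a` of
`∏ binom(a_i, j_i) · x_1^(j_1) ⋯ x_m^(j_m) · x_k^(∑ (a_i - j_i))`, so it survives the truncation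
iff some `j ≤ n` with `∑ (a_i - j_i) ≤ n` has all `binom(a_i, j_i)` odd. Hence `∑ a_i ≤ k n`, and
equality is possible iff `n = b_1 + ⋯ + b_m` with every `binom(n + b_i, n)` odd, i.e. (Lucas) with
the binary digits of every `b_i` among the zero digits of `n`.

Such a decomposition exists iff `n` is a sum of powers `2^l`, `l` a zero digit of `n`, each used at
most `m` times; choosing greedily from the top, this happens iff
`n mod 2^j ≤ m · (2^j - 1 - n mod 2^j)` for every `j`. These inequalities reduce to `n` even,
`m ≥ 2` and the cases `j = i + 1`, `i ∈ S(n)`: a zero digit below `j` only helps, inside a block of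
ones the inequality is inherited from the top of the block, and an isolated one `2^(l+1)` is paid
for by `m` copies of the zero digit `2^l` below it. Since `Z_i(n) = 2^(i+1) - 1 - n mod 2^(i+1)`,
the case `j = i + 1` is exactly `k ≥ ⌈(2^(i+1) - 1) / Z_i(n)⌉`.
-/

open Finset MvPolynomial

theorem Nat.sSup_eq_iff_mem {A : Set ℕ} {N : ℕ} (hA : A.Nonempty) (hN : ∀ x ∈ A, x ≤ N) :
    sSup A = N ↔ N ∈ A :=
  ⟨fun h => h ▸ Nat.sSup_mem hA ⟨N, hN⟩, fun h => IsGreatest.csSup_eq ⟨h, hN⟩⟩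

section BinomialExpansion

variable {R : Type*} [CommSemiring R] {m : ℕ}

noncomputable def binomialExponent (a j : Fin m → ℕ) : Fin (m + 1) →₀ ℕ :=
  Finsupp.equivFunOnFinite.symm (Fin.snoc (α := fun _ => ℕ) j (∑ i, (a i - j i)))

@[simp]
theorem binomialExponent_castSucc (a j : Fin m → ℕ) (i : Fin m) :
    binomialExponent a j i.castSucc = j i := by
  simp [binomialExponent]

@[simp]
theorem binomialExponent_last (a j : Fin m → ℕ) :
    binomialExponent a j (Fin.last m) = ∑ i, (a i - j i) := by
  simp [binomialExponent]

theorem binomialExponent_injective (a : Fin m → ℕ) : Function.Injective (binomialExponent a) :=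
  fun j j' h => funext fun i => by
    simpa using DFunLike.congr_fun h i.castSucc

theorem prod_X_add_X_pow_eq_sum (a : Fin m → ℕ) :
    ∏ i, (X i.castSucc + X (Fin.last m) : MvPolynomial (Fin (m + 1)) R) ^ a i =
      ∑ j ∈ Fintype.piFinset fun i => range (a i + 1),
        monomial (binomialExponent a j) (∏ i, ((a i).choose (j i) : R)) := by
  have factor (i : Fin m) :
      (X i.castSucc + X (Fin.last m) : MvPolynomial (Fin (m + 1)) R) ^ a i =
        ∑ k ∈ range (a i + 1), monomial
          (Finsupp.single i.castSucc k + Finsupp.single (Fin.last m) (a i - k))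
          ((a i).choose k : R) := by
    rw [add_pow]
    refine sum_congr rfl fun k _ => ?_
    rw [X_pow_eq_monomial, X_pow_eq_monomial, monomial_mul, one_mul, ← map_natCast C,
      mul_comm, C_mul_monomial, mul_one]
  simp_rw [factor, prod_univ_sum, ← monomial_sum_prod]
  refine sum_congr rfl fun j _ => ?_
  refine congrArg (fun e => monomial e _) ?_
  ext v
  cases v using Fin.lastCases with
  | last => simp [Fin.castSucc_ne_last]
  | cast i => simp [Finsupp.single_apply, Finsupp.finsetSum_apply]

theorem coeff_binomialExponent_prod_X_add_X_pow (a j : Fin m → ℕ) :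
    coeff (binomialExponent a j)
      (∏ i, (X i.castSucc + X (Fin.last m) : MvPolynomial (Fin (m + 1)) R) ^ a i) =
      ∏ i, ((a i).choose (j i) : R) := by
  simp_rw [prod_X_add_X_pow_eq_sum, coeff_sum, coeff_monomial,
    (binomialExponent_injective a).eq_iff, sum_ite_eq', Fintype.mem_piFinset, mem_range]
  split_ifs with h
  · rfl
  · obtain ⟨i, hi⟩ := not_forall.1 h
    rw [prod_eq_zero (mem_univ i) (by rw [Nat.choose_eq_zero_of_lt (by omega), Nat.cast_zero])]

theorem support_prod_X_add_X_pow_subset (a : Fin m → ℕ) :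
    ((∏ i, (X i.castSucc + X (Fin.last m) : MvPolynomial (Fin (m + 1)) R) ^ a i).support :
      Set (Fin (m + 1) →₀ ℕ)) ⊆ Set.range (binomialExponent a) := by
  rw [prod_X_add_X_pow_eq_sum]
  intro d hd
  obtain ⟨j, -, hj⟩ := mem_biUnion.1 (support_sum hd)
  exact ⟨j, (Finset.mem_singleton.1 (support_monomial_subset hj)).symm⟩

end BinomialExpansion

theorem mk_prod_X_add_X_pow_ne_zero_iff {R : Type*} [CommRing R] {m : ℕ} (n : ℕ) (a : Fin m → ℕ) :
    Ideal.Quotient.mk (Ideal.span (Set.range fun v : Fin (m + 1) =>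
        (X v : MvPolynomial (Fin (m + 1)) R) ^ (n + 1)))
      (∏ i, (X i.castSucc + X (Fin.last m)) ^ a i) ≠ 0 ↔
      ∃ j : Fin m → ℕ, (∀ i, j i ≤ n) ∧ ∑ i, (a i - j i) ≤ n ∧
        ∏ i, ((a i).choose (j i) : R) ≠ 0 := by
  have hspan : (Set.range fun v : Fin (m + 1) => (X v : MvPolynomial (Fin (m + 1)) R) ^ (n + 1)) =
      (fun d => monomial d 1) '' Set.range fun v => Finsupp.single v (n + 1) := by
    simp_rw [← Set.range_comp, Function.comp_def, X_pow_eq_monomial]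
  rw [Ne, Ideal.Quotient.eq_zero_iff_mem, hspan, mem_ideal_span_monomial_image]
  simp only [Set.mem_range, exists_exists_eq_and, Finsupp.single_le_iff, not_forall, not_exists,
    not_le, exists_prop]
  constructor
  · rintro ⟨d, hd, hle⟩
    obtain ⟨j, rfl⟩ := support_prod_X_add_X_pow_subset a hd
    refine ⟨j, fun i => ?_, ?_, ?_⟩
    · simpa using hle i.castSucc
    · simpa using hle (Fin.last m)
    · rwa [mem_support_iff, coeff_binomialExponent_prod_X_add_X_pow] at hd
  · rintro ⟨j, hj, hlast, hcoeff⟩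
    refine ⟨binomialExponent a j, ?_, fun v => ?_⟩
    · rwa [mem_support_iff, coeff_binomialExponent_prod_X_add_X_pow]
    · cases v using Fin.lastCases <;> simp [hj, hlast]

theorem zcl_succ_eq_mul_iff (m n : ℕ) :
    zcl (m + 1) n = (m + 1) * n ↔
      ∃ b : Fin m → ℕ, ∑ i, b i = n ∧ ∀ i, Odd ((n + b i).choose n) := by
  have prod_ne_zero_iff_odd (a j : Fin m → ℕ) :
      ∏ i, ((a i).choose (j i) : ZMod 2) ≠ 0 ↔ ∀ i, Odd ((a i).choose (j i)) := by
    simp [prod_ne_zero_iff, ZMod.natCast_ne_zero_iff_odd]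
  have le_of_odd {a j : ℕ} (h : Odd (a.choose j)) : j ≤ a :=
    not_lt.1 (Nat.choose_eq_zero_iff.not.1 h.pos.ne')
  have split_sum {a j : Fin m → ℕ} (hj : ∀ i, Odd ((a i).choose (j i))) :
      ∑ i, a i = ∑ i, j i + ∑ i, (a i - j i) := by
    rw [← sum_add_distrib]
    refine sum_congr rfl fun i _ => ?_
    have := le_of_odd (hj i)
    omega
  have sum_le {j : Fin m → ℕ} (hj : ∀ i, j i ≤ n) : ∑ i, j i ≤ m * n := by
    simpa using sum_le_sum fun i (_ : i ∈ univ) => hj i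
  unfold zcl
  simp_rw [mk_prod_X_add_X_pow_ne_zero_iff]
  rw [Nat.add_sub_cancel]
  simp_rw [prod_ne_zero_iff_odd]
  refine (Nat.sSup_eq_iff_mem ?_ ?_).trans ⟨?_, ?_⟩
  · exact ⟨0, 0, by simp, 0, by simp⟩
  · rintro _ ⟨a, rfl, j, hjn, hlast, hodd⟩
    rw [split_sum hodd, add_mul, one_mul]
    exact add_le_add (sum_le hjn) hlast
  · rintro ⟨a, ha, j, hjn, hlast, hodd⟩
    have hsum := split_sum hodd
    have hj : ∀ i, j i = n := fun i =>
      (sum_eq_sum_iff_of_le fun i _ => hjn i).1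
        (by rw [sum_const, card_univ, Fintype.card_fin, smul_eq_mul]; linarith [sum_le hjn]) i
        (mem_univ i)
    simp only [hj, sum_const, card_univ, Fintype.card_fin, smul_eq_mul] at hsum hodd
    refine ⟨fun i => a i - n, by linarith, fun i => ?_⟩
    rw [Nat.add_sub_cancel' (le_of_odd (hodd i))]
    exact hodd i
  · rintro ⟨b, hb, hodd⟩
    refine ⟨fun i => n + b i, ?_, fun _ => n, fun _ => le_rfl, ?_, hodd⟩
    · rw [sum_add_distrib, hb, sum_const, card_univ, Fintype.card_fin, smul_eq_mul]
      ring
    · simp [hb]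


namespace Nat

theorem mod_two_pow_succ_eq_add_ite (x j : ℕ) :
    x % 2 ^ (j + 1) = x % 2 ^ j + if x.testBit j then 2 ^ j else 0 := by
  rw [Nat.mod_pow_succ, Nat.testBit_eq_decide_div_mod_eq]
  rcases Nat.mod_two_eq_zero_or_one (x / 2 ^ j) with h | h <;> simp [h]

theorem sum_ite_testBit_add_mod_two_pow (n J : ℕ) :
    ∑ j ∈ range J, (if n.testBit j then 0 else 2 ^ j) + n % 2 ^ J = 2 ^ J - 1 := by
  induction J with
  | zero => simp [Nat.mod_one]
  | succ J ih =>
    rw [sum_range_succ, mod_two_pow_succ_eq_add_ite, pow_succ]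
    have := Nat.one_le_two_pow (n := J)
    split <;> omega

theorem mod_two_pow_add_mod_two_pow_lt {a b : ℕ} (h : ∀ l, ¬(a.testBit l ∧ b.testBit l)) (j : ℕ) :
    a % 2 ^ j + b % 2 ^ j < 2 ^ j := by
  induction j with
  | zero => simp [Nat.mod_one]
  | succ j ih =>
    rw [mod_two_pow_succ_eq_add_ite, mod_two_pow_succ_eq_add_ite, pow_succ]
    split_ifs with ha hb hb
    · exact absurd ⟨ha, hb⟩ (h j)
    all_goals omega

theorem odd_choose_add_iff (a b : ℕ) :
    Odd ((a + b).choose a) ↔ ∀ l, ¬(a.testBit l ∧ b.testBit l) := by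
  induction a using Nat.strong_induction_on generalizing b with
  | _ a ih =>
  rcases Nat.eq_zero_or_pos a with rfl | ha
  · simp
  have lucas := @Choose.choose_modEq_choose_mod_mul_choose_div_nat (a + b) a 2 ⟨Nat.prime_two⟩
  rw [Nat.ModEq] at lucas
  have bits_iff : (∀ l, ¬(a.testBit l ∧ b.testBit l)) ↔
      ¬(a % 2 = 1 ∧ b % 2 = 1) ∧ ∀ l, ¬((a / 2).testBit l ∧ (b / 2).testBit l) := by
    refine ⟨fun h => ⟨by simpa [Nat.testBit_zero] using h 0, fun l => by
      simpa [Nat.testBit_succ] using h (l + 1)⟩, fun ⟨h0, h⟩ l => ?_⟩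
    rcases l with _ | l
    · simpa [Nat.testBit_zero] using h0
    · simpa [Nat.testBit_succ] using h l
  rw [bits_iff, Nat.odd_iff, lucas]
  by_cases hc : a % 2 = 1 ∧ b % 2 = 1
  · have : (a + b) % 2 = 0 := by omega
    simp [this, hc.1, hc]
  · have h1 : ((a + b) % 2).choose (a % 2) = 1 := by
      rcases Nat.mod_two_eq_zero_or_one a with h | h <;>
        rcases Nat.mod_two_eq_zero_or_one b with h' | h' <;> simp_all [Nat.add_mod]
    rw [h1, one_mul, show (a + b) / 2 = a / 2 + b / 2 by omega, ← Nat.odd_iff,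
      ih (a / 2) (by omega)]
    simp [hc]

end Nat

/-- `2 ^ j - 1 - n % 2 ^ j` is the sum of `2 ^ l` over the zero digits `l < j` of `n`,
i.e. `Z_(j-1)(n)`. -/
def LowBitsBound (m n j : ℕ) : Prop :=
  n % 2 ^ j ≤ m * (2 ^ j - 1 - n % 2 ^ j)

theorem sum_range_succ_update_mul_two_pow (s : ℕ → ℕ) (j q : ℕ) :
    ∑ l ∈ range (j + 1), Function.update s j q l * 2 ^ l =
      ∑ l ∈ range j, s l * 2 ^ l + q * 2 ^ j := by
  rw [sum_range_succ, Function.update_self]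
  congr 1
  exact sum_congr rfl fun l hl => by rw [Function.update_of_ne (mem_range.1 hl).ne]

theorem exists_digits_of_forall_lowBitsBound {m n : ℕ}
    (hP : ∀ j, LowBitsBound m n j) (j : ℕ) :
    ∀ R, R % 2 ^ j = n % 2 ^ j → R ≤ m * (2 ^ j - 1 - n % 2 ^ j) →
      ∃ s : ℕ → ℕ, (∀ l, s l ≤ if n.testBit l then 0 else m) ∧
        ∑ l ∈ range j, s l * 2 ^ l = R := by
  induction j with
  | zero =>
    intro R _ hR
    simp only [pow_zero, Nat.mod_one, Nat.sub_self, zero_tsub, mul_zero, nonpos_iff_eq_zero] at hR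
    exact ⟨0, fun _ => Nat.zero_le _, by simp [hR]⟩
  | succ j ih =>
    intro R hRmod hR
    have hRmod' : R % 2 ^ j = n % 2 ^ j := by
      rw [← Nat.mod_mod_of_dvd R (pow_dvd_pow 2 j.le_succ), hRmod,
        Nat.mod_mod_of_dvd n (pow_dvd_pow 2 j.le_succ)]
    have hlt : n % 2 ^ j < 2 ^ j := Nat.mod_lt _ (Nat.two_pow_pos j)
    set c := 2 ^ j - 1 - n % 2 ^ j
    rw [Nat.mod_two_pow_succ_eq_add_ite, pow_succ] at hR
    by_cases hbit : n.testBit j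
    · rw [if_pos hbit, show 2 ^ j * 2 - 1 - (n % 2 ^ j + 2 ^ j) = c by omega] at hR
      obtain ⟨s, hs, hsum⟩ := ih R hRmod' hR
      have hsj : s j = 0 := by simpa [hbit] using hs j
      exact ⟨s, hs, by rw [sum_range_succ, hsum, hsj, zero_mul, add_zero]⟩
    rw [if_neg hbit, show 2 ^ j * 2 - 1 - (n % 2 ^ j + 0) = c + 2 ^ j by omega, mul_add] at hR
    -- greedy step: use as many copies `q ≤ m` of `2 ^ j` as possible
    set q := min m (R / 2 ^ j)
    have hq : q * 2 ^ j ≤ R :=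
      (Nat.mul_le_mul_right _ (min_le_right _ _)).trans (Nat.div_mul_le_self R _)
    have hrest : R - q * 2 ^ j ≤ m * c := by
      rcases le_total m (R / 2 ^ j) with h | h
      · rw [show q = m from min_eq_left h]
        omega
      · rw [show q = R / 2 ^ j from min_eq_right h, ← Nat.mod_eq_sub_div_mul, hRmod']
        exact hP j
    have hrest_mod : (R - q * 2 ^ j) % 2 ^ j = n % 2 ^ j := by
      rw [← hRmod', ← Nat.add_mul_mod_self_right (R - q * 2 ^ j) q, Nat.sub_add_cancel hq]
    obtain ⟨s, hs, hsum⟩ := ih _ hrest_mod hrest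
    refine ⟨Function.update s j q, fun l => ?_, ?_⟩
    · rcases eq_or_ne l j with rfl | h
      · rw [Function.update_self, if_neg hbit]
        exact min_le_left _ _
      · simpa [h] using hs l
    · rw [sum_range_succ_update_mul_two_pow, hsum, Nat.sub_add_cancel hq]

theorem exists_sum_eq_sum_digits {m : ℕ} (s : ℕ → ℕ) (hs : ∀ l, s l ≤ m) (N : ℕ) :
    ∃ b : Fin m → ℕ, ∑ t, b t = ∑ l ∈ range N, s l * 2 ^ l ∧
      ∀ t l, (b t).testBit l → s l ≠ 0 := by
  refine ⟨fun t => ∑ l ∈ range N with (t : ℕ) < s l, 2 ^ l, ?_, fun t l hl => ?_⟩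
  · rw [sum_comm' (t' := range N) (s' := fun l => univ.filter fun t : Fin m => (t : ℕ) < s l)]
    · simp [Fin.card_filter_val_lt, hs]
    · simp [and_comm]
  · rw [← Nat.mem_bitIndices, ← List.mem_toFinset, Finset.toFinset_bitIndices_sum_two_pow] at hl
    have := (mem_filter.1 hl).2
    omega

theorem lowBitsBound_of_sum_eq {m n : ℕ} {b : Fin m → ℕ} (hsum : ∑ t, b t = n)
    (hb : ∀ t l, ¬(n.testBit l ∧ (b t).testBit l)) (j : ℕ) : LowBitsBound m n j := by
  have hle (t : Fin m) : b t % 2 ^ j ≤ 2 ^ j - 1 - n % 2 ^ j := by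
    have := Nat.mod_two_pow_add_mod_two_pow_lt (hb t) j
    omega
  calc n % 2 ^ j = (∑ t, b t % 2 ^ j) % 2 ^ j := by rw [← sum_nat_mod, hsum]
    _ ≤ ∑ t, b t % 2 ^ j := Nat.mod_le _ _
    _ ≤ ∑ _t : Fin m, (2 ^ j - 1 - n % 2 ^ j) := sum_le_sum fun t _ => hle t
    _ = m * (2 ^ j - 1 - n % 2 ^ j) := by simp

theorem exists_bitwise_disjoint_sum_iff {m n : ℕ} :
    (∃ b : Fin m → ℕ, ∑ t, b t = n ∧ ∀ t l, ¬(n.testBit l ∧ (b t).testBit l)) ↔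
      ∀ j, LowBitsBound m n j := by
  refine ⟨fun ⟨b, hsum, hb⟩ => lowBitsBound_of_sum_eq hsum hb, fun hP => ?_⟩
  have hn : n % 2 ^ n = n := Nat.mod_eq_of_lt n.lt_two_pow_self
  obtain ⟨s, hs, hsum⟩ :=
    exists_digits_of_forall_lowBitsBound hP n n rfl (by simpa [LowBitsBound, hn] using hP n)
  obtain ⟨b, hb, hbits⟩ :=
    exists_sum_eq_sum_digits (m := m) s (fun l => by have := hs l; split_ifs at this <;> omega) n
  refine ⟨b, hb.trans hsum, fun t l ⟨hnl, hbl⟩ => hbits t l hbl ?_⟩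
  simpa [hnl] using hs l

theorem mem_Sfin {n i : ℕ} :
    i ∈ Sfin n ↔ 0 < i ∧ n.testBit i ∧ n.testBit (i - 1) ∧ ¬n.testBit (i + 1) := by
  rw [Sfin, mem_filter, mem_range, and_iff_right_iff_imp]
  rintro ⟨-, hi, -⟩
  have := Nat.ge_two_pow_of_testBit hi
  have := i.lt_two_pow_self
  omega

namespace LowBitsBound

variable {m n j : ℕ}

theorem zero : LowBitsBound m n 0 := by
  simp [LowBitsBound, Nat.mod_one]

theorem succ (h : ¬n.testBit j) (hP : LowBitsBound m n j) : LowBitsBound m n (j + 1) := by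
  unfold LowBitsBound at *
  rw [Nat.mod_two_pow_succ_eq_add_ite, if_neg h, add_zero]
  exact hP.trans (Nat.mul_le_mul_left _ (by rw [pow_succ]; omega))

theorem of_succ (h : n.testBit j) (hP : LowBitsBound m n (j + 1)) : LowBitsBound m n j := by
  unfold LowBitsBound at *
  rw [Nat.mod_two_pow_succ_eq_add_ite, if_pos h, pow_succ,
    show 2 ^ j * 2 - 1 - (n % 2 ^ j + 2 ^ j) = 2 ^ j - 1 - n % 2 ^ j by omega] at hP
  omega

theorem add_two (hm : 2 ≤ m) (h₀ : ¬n.testBit j) (h₁ : n.testBit (j + 1))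
    (hP : LowBitsBound m n j) : LowBitsBound m n (j + 2) := by
  unfold LowBitsBound at *
  have hmod : n % 2 ^ (j + 2) = n % 2 ^ j + 2 * 2 ^ j := by
    rw [Nat.mod_two_pow_succ_eq_add_ite, if_pos h₁, Nat.mod_two_pow_succ_eq_add_ite, if_neg h₀,
      pow_succ]
    ring
  have hlt : n % 2 ^ j < 2 ^ j := Nat.mod_lt _ (Nat.two_pow_pos j)
  rw [hmod, show 2 ^ (j + 2) = 4 * 2 ^ j by ring, show 4 * 2 ^ j - 1 - (n % 2 ^ j + 2 * 2 ^ j) =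
    (2 ^ j - 1 - n % 2 ^ j) + 2 ^ j by omega, mul_add]
  have : 2 * 2 ^ j ≤ m * 2 ^ j := Nat.mul_le_mul_right _ hm
  omega

end LowBitsBound

section

variable {m n : ℕ}

theorem lowBitsBound_of_not_testBit (hn : Even n) (hm : 2 ≤ m)
    (hS : ∀ i ∈ Sfin n, LowBitsBound m n (i + 1)) (j : ℕ) (hj : ¬n.testBit j) :
    LowBitsBound m n j := by
  induction j using Nat.strong_induction_on with
  | _ j ih =>
  rcases j with _ | j
  · exact LowBitsBound.zero
  by_cases hbit : n.testBit j
  · rcases j with _ | i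
    · simp [Nat.testBit_zero, Nat.even_iff.1 hn] at hbit
    by_cases hprev : n.testBit i
    · exact hS (i + 1) (mem_Sfin.2 ⟨i.succ_pos, hbit, hprev, hj⟩)
    · exact (ih i (by omega) hprev).add_two hm hprev hbit
  · exact (ih j j.lt_succ_self hbit).succ hbit

theorem lowBitsBound_of_Sfin (hn : Even n) (hm : 2 ≤ m)
    (hS : ∀ i ∈ Sfin n, LowBitsBound m n (i + 1)) (j : ℕ) : LowBitsBound m n j := by
  have base := lowBitsBound_of_not_testBit hn hm hS
  rcases le_or_gt j n with hj | hj
  · refine Nat.decreasingInduction (fun k _ hk => ?_) ?_ hj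
    · by_cases hbit : n.testBit k
      · exact hk.of_succ hbit
      · exact base k hbit
    · exact base n (by simp [Nat.testBit_lt_two_pow n.lt_two_pow_self])
  · exact base j (by simp [Nat.testBit_lt_two_pow (n.lt_two_pow_self.trans
      (Nat.pow_lt_pow_right one_lt_two hj))])

theorem forall_lowBitsBound_iff (hn : n ≠ 0) :
    (∀ j, LowBitsBound m n j) ↔ Even n ∧ 2 ≤ m ∧ ∀ i ∈ Sfin n, LowBitsBound m n (i + 1) := by
  refine ⟨fun hP => ⟨?_, ?_, fun i _ => hP (i + 1)⟩,
    fun ⟨he, hm, hS⟩ => lowBitsBound_of_Sfin he hm hS⟩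
  · have := hP 1
    simp only [LowBitsBound, pow_one] at this
    rw [Nat.even_iff]
    by_contra h
    rw [show n % 2 = 1 by omega] at this
    simp at this
  · -- below the top digit `L - 1` of `n`, the zero digits of `n` add up to less than `n`
    set L := Nat.log 2 n + 1
    have hlt : n < 2 ^ L := Nat.lt_pow_succ_log_self one_lt_two n
    have hle : 2 ^ L ≤ 2 * n := by
      rw [pow_succ, mul_comm]; exact Nat.mul_le_mul_left 2 (Nat.pow_log_le_self 2 hn)
    have := hP L
    rw [LowBitsBound, Nat.mod_eq_of_lt hlt] at this
    by_contra! hm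
    have := Nat.mul_le_mul_right (2 ^ L - 1 - n) (show m ≤ 1 by omega)
    omega

end

theorem ceil_le_iff_lowBitsBound {n : ℕ} (hn : Even n) (i m : ℕ) :
    ⌈((2 : ℚ) ^ (i + 1) - 1) / (Zfun i n : ℚ)⌉ ≤ ((m + 1 : ℕ) : ℤ) ↔
      LowBitsBound m n (i + 1) := by
  have hsum : Zfun i n + n % 2 ^ (i + 1) = 2 ^ (i + 1) - 1 :=
    Nat.sum_ite_testBit_add_mod_two_pow n (i + 1)
  have hpos : 0 < Zfun i n := by
    have := single_le_sum (f := fun j => if n.testBit j then 0 else 2 ^ j)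
      (fun _ _ => Nat.zero_le _) (mem_range.2 i.succ_pos)
    simp only [Nat.testBit_zero, Nat.even_iff.1 hn] at this
    exact this
  have hq : (2 : ℚ) ^ (i + 1) - 1 = ((Zfun i n + n % 2 ^ (i + 1) : ℕ) : ℚ) := by
    rw [hsum, Nat.cast_sub Nat.one_le_two_pow]
    push_cast
    ring
  rw [LowBitsBound, show 2 ^ (i + 1) - 1 - n % 2 ^ (i + 1) = Zfun i n by omega, Int.ceil_le,
    div_le_iff₀ (by exact_mod_cast hpos), hq, ← Nat.cast_le (α := ℚ)]
  push_cast
  constructor <;> intro h <;> linarith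

/-- For `n ≥ 1` and `k ≥ 2`: `zcl_k(n) = k*n` iff `n` is even and
`k ≥ max({3} ∪ {ceil((2^(i+1) - 1)/Z_i(n)) : i ∈ S(n)})`. -/
theorem zcl_eq_mul_iff (n k : ℕ) (hn : 1 ≤ n) (hk : 2 ≤ k) :
    zcl k n = k * n ↔
      Even n ∧
        (insert (3 : ℤ)
          ((Sfin n).image fun i => ⌈((2 : ℚ) ^ (i + 1) - 1) / (Zfun i n : ℚ)⌉)).max'
          (Finset.insert_nonempty _ _) ≤ (k : ℤ) := by
  obtain ⟨m, rfl⟩ : ∃ m, k = m + 1 := ⟨k - 1, by omega⟩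
  simp_rw [zcl_succ_eq_mul_iff, Nat.odd_choose_add_iff, exists_bitwise_disjoint_sum_iff,
    forall_lowBitsBound_iff (show n ≠ 0 by omega)]
  refine and_congr_right fun he => ?_
  simp_rw [max'_le_iff, forall_mem_insert, forall_mem_image, ceil_le_iff_lowBitsBound he]
  exact and_congr (by omega) Iff.rfl
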